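/- Let w ∈ W and let Π′ ⊆ Π be a subset of the simple roots. If (e_w, α∨) ≥ 0 for every α ∈ Π′, then w is the minimal-length representative of its coset wW_{Π′}, i.e. ℓ(w s_α) > ℓ(w) for every α ∈ Π′ (where W_{Π′} is the subgroup of W generated by {s_α : α ∈ Π′}). -/

import Mathlib

open scoped InnerProductSpace Classical

noncomputable section

/-- A reduced crystallographic root system `Φ` spanning a finite-dimensional real inner
product space `V`, together with a choice of simple roots `π` (determining the positive
system), the corresponding fundamental weights `ω`, the reflections `s`, the Weyl group
`W` and the weight lattice `X`. -/
structure RootSystemData (V : Type) [NormedAddCommGroup V] [InnerProductSpace ℝ V]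
    [FiniteDimensional ℝ V] where
  /-- the (finite) set of roots -/
  Φ : Finset V
  /-- the rank -/
  r : ℕ
  /-- the simple roots `α₁, …, α_r` -/
  π : Fin r → V
  /-- the fundamental weights `ω₁, …, ω_r` -/
  ω : Fin r → V
  /-- the orthogonal reflection attached to a root -/
  s : V → (V ≃ₗ[ℝ] V)
  /-- the Weyl group -/
  W : Subgroup (V ≃ₗ[ℝ] V)
  /-- the weight lattice -/
  X : AddSubgroup V
  root_ne_zero : ∀ α ∈ Φ, α ≠ (0 : V)
  root_span : Submodule.span ℝ (Φ : Set V) = ⊤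
  reduced : ∀ α ∈ Φ, ∀ c : ℝ, c • α ∈ Φ → c = 1 ∨ c = -1
  crystallographic : ∀ α ∈ Φ, ∀ β ∈ Φ, ∃ n : ℤ, 2 * ⟪β, α⟫_ℝ / ⟪α, α⟫_ℝ = (n : ℝ)
  s_apply : ∀ α ∈ Φ, ∀ v : V, s α v = v - (2 * ⟪v, α⟫_ℝ / ⟪α, α⟫_ℝ) • α
  refl_stable : ∀ α ∈ Φ, ∀ β ∈ Φ, s α β ∈ Φ
  W_eq : W = Subgroup.closure {g : V ≃ₗ[ℝ] V | ∃ α ∈ Φ, g = s α}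
  inner_invariant : ∀ g ∈ W, ∀ u v : V, ⟪g u, g v⟫_ℝ = ⟪u, v⟫_ℝ
  simple_mem : ∀ i, π i ∈ Φ
  simple_indep : LinearIndependent ℝ π
  pos_or_neg : ∀ α ∈ Φ,
      (∃ c : Fin r → ℝ, (∀ i, 0 ≤ c i) ∧ α = ∑ i, c i • π i) ∨
      (∃ c : Fin r → ℝ, (∀ i, 0 ≤ c i) ∧ -α = ∑ i, c i • π i)
  fund : ∀ i j, 2 * ⟪ω i, π j⟫_ℝ / ⟪π j, π j⟫_ℝ = if i = j then (1 : ℝ) else 0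
  X_eq : X = AddSubgroup.closure (Set.range ω)
  X_stable : ∀ g ∈ W, ∀ x ∈ X, g x ∈ X

/-- The pairing `(v, α∨) = 2(v,α)/(α,α)` of a vector with the coroot of `α`. -/
def pairing {V : Type} [NormedAddCommGroup V] [InnerProductSpace ℝ V]
    (v α : V) : ℝ := 2 * ⟪v, α⟫_ℝ / ⟪α, α⟫_ℝ

namespace RootSystemData

variable {V : Type} [NormedAddCommGroup V] [InnerProductSpace ℝ V] [FiniteDimensional ℝ V]
variable (C : RootSystemData V)

/-- `α` is a nonnegative combination of the simple roots (a positive root, if `α ∈ Φ`). -/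
def IsPos (α : V) : Prop := ∃ c : Fin C.r → ℝ, (∀ i, 0 ≤ c i) ∧ α = ∑ i, c i • C.π i

/-- `α` is a nonpositive combination of the simple roots (a negative root, if `α ∈ Φ`). -/
def IsNeg (α : V) : Prop := C.IsPos (-α)

/-- A weight is dominant if it pairs nonnegatively with all simple coroots. -/
def IsDominant (lam : V) : Prop := ∀ i, 0 ≤ pairing lam (C.π i)

/-- The product of the simple reflections along a word. -/
def wordProd (l : List (Fin C.r)) : V ≃ₗ[ℝ] V := (l.map fun i => C.s (C.π i)).prod

/-- The length of `w`: the least length of an expression of `w` as a product of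
simple reflections. -/
def length (w : V ≃ₗ[ℝ] V) : ℕ :=
  sInf {n | ∃ l : List (Fin C.r), l.length = n ∧ C.wordProd l = w}

/-- The (strong) Bruhat order on the Weyl group: `u ≤ v` iff `v` is obtained from `u`
by successively multiplying by reflections, increasing the length at each step. -/
def BruhatLE (u v : V ≃ₗ[ℝ] V) : Prop :=
  Relation.ReflTransGen
    (fun a b => (∃ α ∈ C.Φ, b = a * C.s α) ∧ C.length a < C.length b) u v

/-- The Steinberg weight `e_v = v⁻¹ ⬝ ∑_{i : v⁻¹ α_i < 0} ω_i`. -/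
def steinberg (v : V ≃ₗ[ℝ] V) : V :=
  v⁻¹ (∑ i ∈ Finset.univ.filter (fun i => C.IsNeg (v⁻¹ (C.π i))), C.ω i)

/-- The excellent order on weights: `λ ≤ₑ μ` iff `(λ,λ) < (μ,μ)`, or `λ = wν`, `μ = zν`
for some dominant `ν ∈ X` and `w ≤ z` in the Bruhat order. -/
def ExcLE (lam mu : V) : Prop :=
  ⟪lam, lam⟫_ℝ < ⟪mu, mu⟫_ℝ ∨
    ∃ nu ∈ C.X, C.IsDominant nu ∧
      ∃ w ∈ C.W, ∃ z ∈ C.W, C.BruhatLE w z ∧ lam = w nu ∧ mu = z nu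

/-- The strict excellent order. -/
def ExcLT (lam mu : V) : Prop := C.ExcLE lam mu ∧ lam ≠ mu

/-- The antipodal excellent order: `λ ≤ₐ μ` iff `-λ ≤ₑ -μ`. -/
def AntiLE (lam mu : V) : Prop := C.ExcLE (-lam) (-mu)

/-- The strict antipodal excellent order. -/
def AntiLT (lam mu : V) : Prop := C.AntiLE lam mu ∧ lam ≠ mu

/-- The dominance order: `μ ≤_d ν` iff `ν - μ` is a nonnegative integer combination of
the positive roots. -/
def DomLE (mu nu : V) : Prop :=
  ∃ c : V → ℕ, nu - mu = ∑ α ∈ C.Φ.filter (fun a => C.IsPos a), (c α : ℝ) • α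

theorem omega_mem (i : Fin C.r) : C.ω i ∈ C.X := by
  rw [C.X_eq]; exact AddSubgroup.subset_closure ⟨i, rfl⟩

theorem steinberg_mem {v : V ≃ₗ[ℝ] V} (hv : v ∈ C.W) : C.steinberg v ∈ C.X :=
  C.X_stable _ (inv_mem hv) _ (AddSubgroup.sum_mem _ fun i _ => C.omega_mem i)

/-- The group ring `ℤ[X]` of the weight lattice. -/
abbrev GroupRing := AddMonoidAlgebra ℤ ↥C.X

/-- The basis element `e^λ` of `ℤ[X]`. -/
def expo (x : V) (hx : x ∈ C.X) : C.GroupRing := AddMonoidAlgebra.single ⟨x, hx⟩ 1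

/-- `e^λ`, defined for all `λ : V` (and zero off the lattice). -/
def expoOf (x : V) : C.GroupRing := if hx : x ∈ C.X then C.expo x hx else 0

/-- The coefficient of `e^x` in an element of `ℤ[X]`. -/
def coeff (m : C.GroupRing) (x : ↥C.X) : ℤ := (AddMonoidAlgebra.coeff m : ↥C.X →₀ ℤ) x

/-- The support of an element of `ℤ[X]`. -/
def supp (m : C.GroupRing) : Finset ↥C.X := (AddMonoidAlgebra.coeff m : ↥C.X →₀ ℤ).support

/-- The action of `g ∈ W` on the weight lattice. -/
def actX (g : V ≃ₗ[ℝ] V) (hg : g ∈ C.W) : ↥C.X → ↥C.X :=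
  fun x => ⟨g x, C.X_stable g hg x.1 x.2⟩

/-- The action of `g ∈ W` on `ℤ[X]`, with `e^λ ↦ e^{gλ}`. -/
def wAct (g : V ≃ₗ[ℝ] V) (hg : g ∈ C.W) (m : C.GroupRing) : C.GroupRing :=
  AddMonoidAlgebra.ofCoeff (Finsupp.mapDomain (C.actX g hg) (AddMonoidAlgebra.coeff m))

/-- `m` lies in the invariant subring `ℤ[X]^W`. -/
def IsWInvariant (m : C.GroupRing) : Prop := ∀ g (hg : g ∈ C.W), C.wAct g hg m = m

/-- The parabolic subgroup `W_{Π'}` generated by the simple reflections `s_α, α ∈ Π'`,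
for a subset `Π'` of the simple roots (given by a subset `J` of the index set). -/
def parabolicSubgroup (J : Set (Fin C.r)) : Subgroup (V ≃ₗ[ℝ] V) :=
  Subgroup.closure {g | ∃ i ∈ J, g = C.s (C.π i)}

theorem parabolic_le (J : Set (Fin C.r)) : C.parabolicSubgroup J ≤ C.W := by
  refine (Subgroup.closure_le _).2 ?_
  rintro g ⟨i, _, rfl⟩
  rw [C.W_eq]
  exact Subgroup.subset_closure ⟨C.π i, C.simple_mem i, rfl⟩

/-- `m` lies in the invariant subring `ℤ[X]^H` for a subgroup `H ≤ W`. -/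
def IsInvariantUnder (H : Subgroup (V ≃ₗ[ℝ] V)) (hH : H ≤ C.W) (m : C.GroupRing) : Prop :=
  ∀ g (hg : g ∈ H), C.wAct g (hH hg) m = m

/-- `v` is of minimal length in its coset `v ⬝ W_{Π'}`. -/
def IsMinCosetRep (J : Set (Fin C.r)) (v : V ≃ₗ[ℝ] V) : Prop :=
  v ∈ C.W ∧ ∀ z ∈ C.parabolicSubgroup J, C.length v ≤ C.length (v * z)

/-- The subgroup generated by the simple reflections fixing a given vector. -/
def fixSubgroup (x : V) : Subgroup (V ≃ₗ[ℝ] V) :=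
  Subgroup.closure {g | ∃ i : Fin C.r, C.s (C.π i) x = x ∧ g = C.s (C.π i)}

end RootSystemData

/-!
A simple reflection `s_i` permutes the positive roots other than `α_i`. Descending along the
height `β ↦ (ρ, β)` with `ρ = ∑ ω_i`, this shows that `W` is generated by the simple reflections;
along a word it gives the exchange condition and `ℓ(w) = #{β > 0 | wβ < 0}`.

If `(e_w, α_j∨) ≥ 0` then `wα_j > 0`. Otherwise `-wα_j > 0` involves some `α_k` with
`w⁻¹α_k < 0` (else `-α_j = w⁻¹(-wα_j) > 0`); these are exactly the `α_k` paired positively by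
`w e_w = ∑_{w⁻¹α_k < 0} ω_k`, so `(e_w, α_j) = (w e_w, wα_j) < 0`. Once `wα_j > 0` for all `j ∈ J`, every inversion `β` of `w` lies outside
`Φ_J`, i.e. pairs positively with `λ = ∑_{k ∉ J} ω_k`. Since `W_J` fixes `λ`, each `z ∈ W_J`
maps the inversions of `w` injectively (by `β ↦ z⁻¹β`) into those of `wz`, so `ℓ(w) ≤ ℓ(wz)`.
-/

namespace RootSystemData

variable {V : Type} [NormedAddCommGroup V] [InnerProductSpace ℝ V] [FiniteDimensional ℝ V]
variable (C : RootSystemData V)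

section Reflections

theorem inner_self_pos {α : V} (hα : α ∈ C.Φ) : 0 < ⟪α, α⟫_ℝ :=
  real_inner_self_pos.2 (C.root_ne_zero α hα)

theorem s_apply_self {α : V} (hα : α ∈ C.Φ) : C.s α α = -α := by
  rw [C.s_apply α hα, mul_div_assoc, div_self (C.inner_self_pos hα).ne', mul_one]
  module

theorem neg_mem {α : V} (hα : α ∈ C.Φ) : -α ∈ C.Φ :=
  C.s_apply_self hα ▸ C.refl_stable α hα α hα

theorem s_neg {α : V} (hα : α ∈ C.Φ) : C.s (-α) = C.s α := by
  ext v
  rw [C.s_apply _ (C.neg_mem hα), C.s_apply α hα, inner_neg_right, inner_neg_neg]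
  module

theorem s_apply_s_apply {α : V} (hα : α ∈ C.Φ) (v : V) : C.s α (C.s α v) = v := by
  have hne := (C.inner_self_pos hα).ne'
  rw [C.s_apply α hα v, C.s_apply α hα, inner_sub_left, real_inner_smul_left]
  field_simp
  module

theorem s_mul_self {α : V} (hα : α ∈ C.Φ) : C.s α * C.s α = 1 :=
  LinearEquiv.ext (C.s_apply_s_apply hα)

theorem s_inv {α : V} (hα : α ∈ C.Φ) : (C.s α)⁻¹ = C.s α :=
  inv_eq_of_mul_eq_one_left (C.s_mul_self hα)

theorem s_mem_W {α : V} (hα : α ∈ C.Φ) : C.s α ∈ C.W := by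
  rw [C.W_eq]
  exact Subgroup.subset_closure ⟨α, hα, rfl⟩

theorem s_simple_mem_W (i : Fin C.r) : C.s (C.π i) ∈ C.W :=
  C.s_mem_W (C.simple_mem i)

theorem apply_mem_of_mem_W {g : V ≃ₗ[ℝ] V} (hg : g ∈ C.W) {β : V} (hβ : β ∈ C.Φ) :
    g β ∈ C.Φ := by
  rw [C.W_eq] at hg
  induction hg using Subgroup.closure_induction'' generalizing β with
  | mem _ hs =>
    obtain ⟨α, hα, rfl⟩ := hs
    exact C.refl_stable α hα β hβ
  | inv_mem _ hs =>
    obtain ⟨α, hα, rfl⟩ := hs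
    rw [C.s_inv hα]
    exact C.refl_stable α hα β hβ
  | one => exact hβ
  | mul _ _ _ _ ihx ihy => exact ihx (ihy hβ)

theorem inner_inv_apply {g : V ≃ₗ[ℝ] V} (hg : g ∈ C.W) (u v : V) :
    ⟪g⁻¹ u, v⟫_ℝ = ⟪u, g v⟫_ℝ := by
  simpa using (C.inner_invariant g hg (g⁻¹ u) v).symm

theorem s_apply_conj {g : V ≃ₗ[ℝ] V} (hg : g ∈ C.W) {α : V} (hα : α ∈ C.Φ) :
    C.s (g α) = g * C.s α * g⁻¹ := by
  ext v
  rw [C.s_apply _ (C.apply_mem_of_mem_W hg hα), LinearEquiv.mul_apply, LinearEquiv.mul_apply,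
    C.s_apply α hα, map_sub, map_smul, C.inner_inv_apply hg, C.inner_invariant g hg]
  simp

end Reflections

section Positivity

theorem isPos_simple (i : Fin C.r) : C.IsPos (C.π i) :=
  ⟨Pi.single i 1, fun k => by by_cases hk : k = i <;> simp [hk], by simp [Pi.single_apply]⟩

theorem isPos_zero : C.IsPos 0 :=
  ⟨0, fun _ => le_rfl, by simp⟩

theorem isPos_add {β γ : V} (hβ : C.IsPos β) (hγ : C.IsPos γ) : C.IsPos (β + γ) := by
  obtain ⟨c, hc, rfl⟩ := hβ
  obtain ⟨d, hd, rfl⟩ := hγ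
  exact ⟨c + d, fun k => add_nonneg (hc k) (hd k), by simp [add_smul, Finset.sum_add_distrib]⟩

theorem isPos_smul {t : ℝ} (ht : 0 ≤ t) {β : V} (hβ : C.IsPos β) : C.IsPos (t • β) := by
  obtain ⟨c, hc, rfl⟩ := hβ
  exact ⟨t • c, fun k => mul_nonneg ht (hc k), by simp [Finset.smul_sum, mul_smul]⟩

theorem isPos_sum {ι : Type*} (s : Finset ι) (f : ι → V) (h : ∀ k ∈ s, C.IsPos (f k)) :
    C.IsPos (∑ k ∈ s, f k) := by
  induction s using Finset.induction_on with
  | empty => simpa using C.isPos_zero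
  | insert k s hk ih =>
    rw [Finset.sum_insert hk]
    exact C.isPos_add (h k (Finset.mem_insert_self k s))
      (ih fun k hk => h k (Finset.mem_insert_of_mem hk))

theorem isPos_or_isNeg {β : V} (hβ : β ∈ C.Φ) : C.IsPos β ∨ C.IsNeg β :=
  C.pos_or_neg β hβ

theorem isPos_of_eq_sum_of_pos {β : V} (hβ : β ∈ C.Φ) {c : Fin C.r → ℝ}
    (hc : β = ∑ m, c m • C.π m) {k : Fin C.r} (hk : 0 < c k) : C.IsPos β := by
  refine (C.isPos_or_isNeg hβ).resolve_right ?_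
  rintro ⟨d, hd, hds⟩
  have hsum : ∑ m, (c m + d m) • C.π m = 0 := by
    simp only [add_smul, Finset.sum_add_distrib, ← hc, ← hds, add_neg_cancel]
  have := Fintype.linearIndependent_iff.1 C.simple_indep _ hsum k
  linarith [hd k]

theorem not_isNeg_of_isPos {β : V} (hβ : β ≠ 0) (hpos : C.IsPos β) : ¬ C.IsNeg β := by
  obtain ⟨c, hc, rfl⟩ := hpos
  rintro ⟨d, hd, hds⟩
  have hsum : ∑ m, (c m + d m) • C.π m = 0 := by
    simp only [add_smul, Finset.sum_add_distrib, ← hds, add_neg_cancel]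
  have hzero := Fintype.linearIndependent_iff.1 C.simple_indep _ hsum
  refine hβ (Finset.sum_eq_zero fun m _ => ?_)
  rw [show c m = 0 by linarith [hzero m, hc m, hd m], zero_smul]

theorem isPos_s_simple_apply {i : Fin C.r} {β : V} (hβ : β ∈ C.Φ) (hpos : C.IsPos β)
    (hne : β ≠ C.π i) : C.IsPos (C.s (C.π i) β) := by
  obtain ⟨c, hc, rfl⟩ := hpos
  obtain ⟨k, hki, hk⟩ : ∃ k, k ≠ i ∧ 0 < c k := by
    by_contra! hle
    have hsingle : ∑ m, c m • C.π m = c i • C.π i :=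
      Finset.sum_eq_single i (fun m _ hmi => by rw [le_antisymm (hle m hmi) (hc m), zero_smul])
        (by simp)
    rcases C.reduced _ (C.simple_mem i) (c i) (hsingle ▸ hβ) with h1 | h1
    · exact hne (by rw [hsingle, h1, one_smul])
    · linarith [hc i]
  -- `s_i` only changes the `α_i`-coordinate, so the positive `α_k`-coordinate survives
  refine C.isPos_of_eq_sum_of_pos (C.refl_stable _ (C.simple_mem i) _ hβ)
    (c := c - Pi.single i (pairing (∑ m, c m • C.π m) (C.π i))) ?_ (k := k)
    (by simpa [hki] using hk)
  rw [C.s_apply _ (C.simple_mem i)]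
  simp [pairing, sub_smul, Finset.sum_sub_distrib, Pi.single_apply, ite_smul]

theorem inner_nonneg_of_isPos {lam β : V} (hlam : ∀ k, 0 ≤ ⟪lam, C.π k⟫_ℝ)
    (hβ : C.IsPos β) : 0 ≤ ⟪lam, β⟫_ℝ := by
  obtain ⟨c, hc, rfl⟩ := hβ
  simp only [inner_sum, real_inner_smul_right]
  exact Finset.sum_nonneg fun k _ => mul_nonneg (hc k) (hlam k)

theorem isPos_of_inner_pos {lam β : V} (hlam : ∀ k, 0 ≤ ⟪lam, C.π k⟫_ℝ) (hβ : β ∈ C.Φ)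
    (h : 0 < ⟪lam, β⟫_ℝ) : C.IsPos β := by
  refine (C.isPos_or_isNeg hβ).resolve_right fun hneg => ?_
  have := C.inner_nonneg_of_isPos hlam hneg
  rw [inner_neg_right] at this
  linarith

theorem exists_inner_simple_pos {β : V} (hβ : β ∈ C.Φ) (hpos : C.IsPos β) :
    ∃ i, 0 < ⟪β, C.π i⟫_ℝ := by
  by_contra! hle
  have := C.inner_nonneg_of_isPos (lam := -β) (fun k => by rw [inner_neg_left]; linarith [hle k])
    hpos
  rw [inner_neg_left] at this
  linarith [C.inner_self_pos hβ]

end Positivity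

section FundamentalWeights

theorem inner_sum_omega_simple (T : Finset (Fin C.r)) (k : Fin C.r) :
    ⟪∑ i ∈ T, C.ω i, C.π k⟫_ℝ = if k ∈ T then ⟪C.π k, C.π k⟫_ℝ / 2 else 0 := by
  have hk := (C.inner_self_pos (C.simple_mem k)).ne'
  have hfund : ∀ i, ⟪C.ω i, C.π k⟫_ℝ = if i = k then ⟪C.π k, C.π k⟫_ℝ / 2 else 0 := by
    intro i
    have := C.fund i k
    rw [div_eq_iff hk] at this
    split_ifs at this ⊢ <;> linarith
  simp only [sum_inner, hfund, Finset.sum_ite_eq']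

theorem inner_sum_omega_simple_nonneg (T : Finset (Fin C.r)) (k : Fin C.r) :
    0 ≤ ⟪∑ i ∈ T, C.ω i, C.π k⟫_ℝ := by
  rw [C.inner_sum_omega_simple]
  split_ifs
  · exact (half_pos (C.inner_self_pos (C.simple_mem k))).le
  · exact le_rfl

/-- Such a `β` is a combination of the `α_k` with `k ∉ T` only. -/
theorem isPos_map_of_inner_sum_omega_nonpos (u : V →ₗ[ℝ] V) {T : Finset (Fin C.r)}
    (hu : ∀ k ∉ T, C.IsPos (u (C.π k))) {β : V} (hβ : C.IsPos β)
    (h : ⟪∑ k ∈ T, C.ω k, β⟫_ℝ ≤ 0) : C.IsPos (u β) := by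
  obtain ⟨c, hc, rfl⟩ := hβ
  have hterm : ∀ k ∈ Finset.univ, 0 ≤ c k * ⟪∑ i ∈ T, C.ω i, C.π k⟫_ℝ :=
    fun k _ => mul_nonneg (hc k) (C.inner_sum_omega_simple_nonneg T k)
  have hsum : ∑ k, c k * ⟪∑ i ∈ T, C.ω i, C.π k⟫_ℝ = 0 := by
    refine le_antisymm ?_ (Finset.sum_nonneg hterm)
    simpa only [inner_sum, real_inner_smul_right] using h
  have hzero : ∀ k ∈ T, c k = 0 := by
    intro k hk
    have := (Finset.sum_eq_zero_iff_of_nonneg hterm).1 hsum k (Finset.mem_univ k)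
    rw [C.inner_sum_omega_simple, if_pos hk] at this
    exact (mul_eq_zero.1 this).resolve_right (half_pos (C.inner_self_pos (C.simple_mem k))).ne'
  rw [map_sum]
  refine C.isPos_sum _ _ fun k _ => ?_
  rw [map_smul]
  by_cases hk : k ∈ T
  · rw [hzero k hk, zero_smul]
    exact C.isPos_zero
  · exact C.isPos_smul (hc k) (hu k hk)

end FundamentalWeights

section SimpleGeneration

theorem inner_s_simple_apply_lt {ρ β : V} {i : Fin C.r} (hρ : 0 < ⟪ρ, C.π i⟫_ℝ)
    (hβ : 0 < ⟪β, C.π i⟫_ℝ) : ⟪ρ, C.s (C.π i) β⟫_ℝ < ⟪ρ, β⟫_ℝ := by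
  have hii := C.inner_self_pos (C.simple_mem i)
  rw [C.s_apply _ (C.simple_mem i), inner_sub_right, real_inner_smul_right]
  have : 0 < 2 * ⟪β, C.π i⟫_ℝ / ⟪C.π i, C.π i⟫_ℝ * ⟪ρ, C.π i⟫_ℝ := by positivity
  linarith

theorem s_mem_parabolicSubgroup_univ_of_isPos {β : V} (hβ : β ∈ C.Φ) (hpos : C.IsPos β) :
    C.s β ∈ C.parabolicSubgroup Set.univ := by
  obtain ⟨ρ, hρ⟩ : ∃ ρ : V, ∀ i, 0 < ⟪ρ, C.π i⟫_ℝ := by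
    refine ⟨∑ i, C.ω i, fun i => ?_⟩
    rw [C.inner_sum_omega_simple, if_pos (Finset.mem_univ i)]
    exact half_pos (C.inner_self_pos (C.simple_mem i))
  induction hn : (C.Φ.filter fun γ => ⟪ρ, γ⟫_ℝ < ⟪ρ, β⟫_ℝ).card
    using Nat.strong_induction_on generalizing β with
  | _ n ih =>
  by_cases hsimple : ∃ i, β = C.π i
  · obtain ⟨i, rfl⟩ := hsimple
    exact Subgroup.subset_closure ⟨i, Set.mem_univ i, rfl⟩
  obtain ⟨i, hi⟩ := C.exists_inner_simple_pos hβ hpos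
  obtain ⟨γ, hγβ⟩ : ∃ γ, γ = C.s (C.π i) β := ⟨_, rfl⟩
  have hγ : γ ∈ C.Φ := hγβ ▸ C.refl_stable _ (C.simple_mem i) _ hβ
  have hγpos : C.IsPos γ := hγβ ▸ C.isPos_s_simple_apply hβ hpos fun h => hsimple ⟨i, h⟩
  have hlt : ⟪ρ, γ⟫_ℝ < ⟪ρ, β⟫_ℝ := hγβ ▸ C.inner_s_simple_apply_lt (hρ i) hi
  have hcard : (C.Φ.filter fun δ => ⟪ρ, δ⟫_ℝ < ⟪ρ, γ⟫_ℝ).card < n := by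
    rw [← hn]
    refine Finset.card_lt_card ((Finset.ssubset_iff_of_subset ?_).2 ⟨γ, ?_, ?_⟩)
    · intro δ hδ
      simp only [Finset.mem_filter] at hδ ⊢
      exact ⟨hδ.1, hδ.2.trans hlt⟩
    · exact Finset.mem_filter.2 ⟨hγ, hlt⟩
    · simp
  have hβγ : β = C.s (C.π i) γ := by rw [hγβ, C.s_apply_s_apply (C.simple_mem i)]
  have hsi : C.s (C.π i) ∈ C.parabolicSubgroup Set.univ :=
    Subgroup.subset_closure ⟨i, Set.mem_univ i, rfl⟩
  rw [hβγ, C.s_apply_conj (C.s_simple_mem_W i) hγ]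
  exact mul_mem (mul_mem hsi (ih _ hcard hγ hγpos rfl)) (inv_mem hsi)

theorem W_eq_parabolicSubgroup_univ : C.W = C.parabolicSubgroup Set.univ := by
  refine le_antisymm ?_ (C.parabolic_le Set.univ)
  rw [C.W_eq, Subgroup.closure_le]
  rintro _ ⟨β, hβ, rfl⟩
  rcases C.isPos_or_isNeg hβ with hpos | hneg
  · exact C.s_mem_parabolicSubgroup_univ_of_isPos hβ hpos
  · rw [← C.s_neg hβ]
    exact C.s_mem_parabolicSubgroup_univ_of_isPos (C.neg_mem hβ) hneg

end SimpleGeneration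

section Words

theorem wordProd_nil : C.wordProd [] = 1 := rfl

theorem wordProd_cons (i : Fin C.r) (l : List (Fin C.r)) :
    C.wordProd (i :: l) = C.s (C.π i) * C.wordProd l := by
  simp [wordProd]

theorem wordProd_append (l l' : List (Fin C.r)) :
    C.wordProd (l ++ l') = C.wordProd l * C.wordProd l' := by
  simp [wordProd]

theorem wordProd_singleton (i : Fin C.r) : C.wordProd [i] = C.s (C.π i) := by
  simp [wordProd]

theorem wordProd_mem_W (l : List (Fin C.r)) : C.wordProd l ∈ C.W := by
  refine C.W.list_prod_mem fun g hg => ?_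
  obtain ⟨i, _, rfl⟩ := List.mem_map.1 hg
  exact C.s_simple_mem_W i

theorem exists_wordProd_eq {w : V ≃ₗ[ℝ] V} (hw : w ∈ C.W) : ∃ l, C.wordProd l = w := by
  rw [C.W_eq_parabolicSubgroup_univ] at hw
  induction hw using Subgroup.closure_induction'' with
  | mem _ hs =>
    obtain ⟨i, _, rfl⟩ := hs
    exact ⟨[i], C.wordProd_singleton i⟩
  | inv_mem _ hs =>
    obtain ⟨i, _, rfl⟩ := hs
    exact ⟨[i], by rw [C.wordProd_singleton, C.s_inv (C.simple_mem i)]⟩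
  | one => exact ⟨[], C.wordProd_nil⟩
  | mul _ _ _ _ ihx ihy =>
    obtain ⟨l, rfl⟩ := ihx
    obtain ⟨l', rfl⟩ := ihy
    exact ⟨l ++ l', C.wordProd_append l l'⟩

theorem length_le_of_wordProd_eq {l : List (Fin C.r)} {w : V ≃ₗ[ℝ] V}
    (h : C.wordProd l = w) : C.length w ≤ l.length :=
  Nat.sInf_le ⟨l, rfl, h⟩

theorem exists_reduced_word {w : V ≃ₗ[ℝ] V} (hw : w ∈ C.W) :
    ∃ l, C.wordProd l = w ∧ l.length = C.length w := by
  obtain ⟨l, hl⟩ := C.exists_wordProd_eq hw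
  have : C.length w ∈ {n | ∃ l : List (Fin C.r), l.length = n ∧ C.wordProd l = w} :=
    Nat.sInf_mem ⟨l.length, l, rfl, hl⟩
  obtain ⟨l', hlen, hl'⟩ := this
  exact ⟨l', hl', hlen⟩

/-- The exchange condition. -/
theorem exists_wordProd_eq_mul_simple_of_isNeg (l : List (Fin C.r)) {j : Fin C.r}
    (h : C.IsNeg (C.wordProd l (C.π j))) :
    ∃ l', l'.length + 1 = l.length ∧ C.wordProd l' = C.wordProd l * C.s (C.π j) := by
  induction l with
  | nil =>
    exact absurd h (C.not_isNeg_of_isPos (C.root_ne_zero _ (C.simple_mem j)) (C.isPos_simple j))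
  | cons i l ih =>
    set u := C.wordProd l
    have hu : u ∈ C.W := C.wordProd_mem_W l
    have huj : u (C.π j) ∈ C.Φ := C.apply_mem_of_mem_W hu (C.simple_mem j)
    rw [C.wordProd_cons, LinearEquiv.mul_apply] at h
    rcases C.isPos_or_isNeg huj with hpos | hneg
    · -- `s_i` sends the positive root `u α_j` to a negative one, so `u α_j = α_i`
      have hui : u (C.π j) = C.π i := by
        by_contra hne
        refine C.not_isNeg_of_isPos ?_ (C.isPos_s_simple_apply huj hpos hne) h
        exact (C.s (C.π i)).map_ne_zero_iff.2 (C.root_ne_zero _ huj)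
      refine ⟨l, rfl, ?_⟩
      rw [C.wordProd_cons, ← hui, C.s_apply_conj hu (C.simple_mem j)]
      simp [u, mul_assoc, C.s_mul_self (C.simple_mem j)]
    · obtain ⟨l', hlen, hl'⟩ := ih hneg
      exact ⟨i :: l', by simp [hlen], by rw [C.wordProd_cons, C.wordProd_cons, hl', mul_assoc]⟩

theorem length_mul_simple_le {w : V ≃ₗ[ℝ] V} (hw : w ∈ C.W) (i : Fin C.r) :
    C.length (w * C.s (C.π i)) ≤ C.length w + 1 := by
  obtain ⟨l, rfl, hlen⟩ := C.exists_reduced_word hw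
  have := C.length_le_of_wordProd_eq (C.wordProd_append l [i])
  rw [C.wordProd_singleton, List.length_append, hlen] at this
  exact this

theorem length_mul_simple_lt_of_isNeg {w : V ≃ₗ[ℝ] V} (hw : w ∈ C.W) {j : Fin C.r}
    (h : C.IsNeg (w (C.π j))) : C.length (w * C.s (C.π j)) < C.length w := by
  obtain ⟨l, rfl, hlen⟩ := C.exists_reduced_word hw
  obtain ⟨l', hlen', hl'⟩ := C.exists_wordProd_eq_mul_simple_of_isNeg l h
  have := C.length_le_of_wordProd_eq hl'
  omega

end Words

section Inversions

def invSet (w : V ≃ₗ[ℝ] V) : Finset V :=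
  C.Φ.filter fun β => C.IsPos β ∧ C.IsNeg (w β)

theorem mem_invSet {w : V ≃ₗ[ℝ] V} {β : V} :
    β ∈ C.invSet w ↔ β ∈ C.Φ ∧ C.IsPos β ∧ C.IsNeg (w β) :=
  Finset.mem_filter

theorem card_invSet_mul_simple_of_isNeg {w : V ≃ₗ[ℝ] V} {i : Fin C.r}
    (h : C.IsNeg (w (C.π i))) :
    (C.invSet (w * C.s (C.π i))).card + 1 = (C.invSet w).card := by
  have hi := C.simple_mem i
  have hnot : C.π i ∉ C.invSet (w * C.s (C.π i)) := by
    rw [C.mem_invSet, LinearEquiv.mul_apply, C.s_apply_self hi, map_neg]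
    exact fun ⟨_, _, hneg⟩ =>
      C.not_isNeg_of_isPos (neg_ne_zero.2 (w.map_ne_zero_iff.2 (C.root_ne_zero _ hi))) h hneg
  have hbij : (C.invSet (w * C.s (C.π i))).card = ((C.invSet w).erase (C.π i)).card := by
    refine Finset.card_nbij' (C.s (C.π i)) (C.s (C.π i)) ?_ ?_ ?_ ?_
    · intro γ hγ
      have hγi : γ ≠ C.π i := fun h => hnot (h ▸ hγ)
      obtain ⟨hγΦ, hγpos, hγneg⟩ := C.mem_invSet.1 hγ
      refine Finset.mem_erase.2 ⟨fun h => ?_, C.mem_invSet.2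
        ⟨C.refl_stable _ hi _ hγΦ, C.isPos_s_simple_apply hγΦ hγpos hγi, hγneg⟩⟩
      have : γ = -C.π i := by rw [← C.s_apply_s_apply hi γ, h, C.s_apply_self hi]
      exact C.not_isNeg_of_isPos (C.root_ne_zero _ hi) (C.isPos_simple i)
        (by rwa [IsNeg, ← this])
    · intro β hβ
      obtain ⟨hβi, hβ⟩ := Finset.mem_erase.1 hβ
      obtain ⟨hβΦ, hβpos, hβneg⟩ := C.mem_invSet.1 hβ
      refine C.mem_invSet.2 ⟨C.refl_stable _ hi _ hβΦ, C.isPos_s_simple_apply hβΦ hβpos hβi, ?_⟩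
      rwa [LinearEquiv.mul_apply, C.s_apply_s_apply hi]
    · exact fun γ _ => C.s_apply_s_apply hi γ
    · exact fun β _ => C.s_apply_s_apply hi β
  rw [hbij, Finset.card_erase_add_one (C.mem_invSet.2 ⟨hi, C.isPos_simple i, h⟩)]

theorem card_invSet_mul_simple_of_isPos {w : V ≃ₗ[ℝ] V} {i : Fin C.r}
    (h : C.IsPos (w (C.π i))) :
    (C.invSet (w * C.s (C.π i))).card = (C.invSet w).card + 1 := by
  have hneg : C.IsNeg ((w * C.s (C.π i)) (C.π i)) := by
    rwa [LinearEquiv.mul_apply, C.s_apply_self (C.simple_mem i), map_neg, IsNeg, neg_neg]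
  have := C.card_invSet_mul_simple_of_isNeg hneg
  rwa [mul_assoc, C.s_mul_self (C.simple_mem i), mul_one, eq_comm] at this

theorem length_wordProd_le_card_invSet_le (l : List (Fin C.r)) :
    C.length (C.wordProd l) ≤ (C.invSet (C.wordProd l)).card ∧
      (C.invSet (C.wordProd l)).card ≤ l.length := by
  induction l using List.reverseRecOn with
  | nil =>
    have hempty : C.invSet (C.wordProd []) = ∅ := Finset.filter_eq_empty_iff.2
      fun β hβ ⟨hpos, hneg⟩ => C.not_isNeg_of_isPos (C.root_ne_zero β hβ) hpos hneg
    rw [hempty]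
    simpa using C.length_le_of_wordProd_eq (l := []) rfl
  | append_singleton l i ih =>
    have hu := C.wordProd_mem_W l
    rw [C.wordProd_append, C.wordProd_singleton, List.length_append, List.length_singleton]
    rcases C.isPos_or_isNeg (C.apply_mem_of_mem_W hu (C.simple_mem i)) with hpos | hneg
    · have := C.card_invSet_mul_simple_of_isPos hpos
      have := C.length_mul_simple_le hu i
      omega
    · have := C.card_invSet_mul_simple_of_isNeg hneg
      have := C.length_mul_simple_lt_of_isNeg hu hneg
      omega

theorem length_eq_card_invSet {w : V ≃ₗ[ℝ] V} (hw : w ∈ C.W) :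
    C.length w = (C.invSet w).card := by
  obtain ⟨l, rfl, hlen⟩ := C.exists_reduced_word hw
  obtain ⟨hle, hge⟩ := C.length_wordProd_le_card_invSet_le l
  omega

end Inversions

section Parabolic

def weightCompl (J : Set (Fin C.r)) : V :=
  ∑ k ∈ Finset.univ.filter (· ∉ J), C.ω k

theorem parabolicSubgroup_le_stabilizer (J : Set (Fin C.r)) :
    C.parabolicSubgroup J ≤ MulAction.stabilizer (V ≃ₗ[ℝ] V) (C.weightCompl J) := by
  rw [parabolicSubgroup, Subgroup.closure_le]
  rintro _ ⟨j, hj, rfl⟩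
  rw [SetLike.mem_coe, MulAction.mem_stabilizer_iff, LinearEquiv.smul_def,
    C.s_apply _ (C.simple_mem j), weightCompl, C.inner_sum_omega_simple]
  simp [hj]

theorem inner_weightCompl_pos_of_mem_invSet {J : Set (Fin C.r)} {w : V ≃ₗ[ℝ] V}
    (hJ : ∀ j ∈ J, C.IsPos (w (C.π j))) {β : V} (hβ : β ∈ C.invSet w) :
    0 < ⟪C.weightCompl J, β⟫_ℝ := by
  obtain ⟨hβΦ, hβpos, hβneg⟩ := C.mem_invSet.1 hβ
  by_contra! hle
  refine C.not_isNeg_of_isPos (w.map_ne_zero_iff.2 (C.root_ne_zero β hβΦ)) ?_ hβneg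
  exact C.isPos_map_of_inner_sum_omega_nonpos w.toLinearMap
    (fun k hk => hJ k (by simpa using hk)) hβpos hle

theorem card_invSet_le_card_invSet_mul {J : Set (Fin C.r)} {w : V ≃ₗ[ℝ] V}
    (hJ : ∀ j ∈ J, C.IsPos (w (C.π j))) {z : V ≃ₗ[ℝ] V} (hz : z ∈ C.parabolicSubgroup J) :
    (C.invSet w).card ≤ (C.invSet (w * z)).card := by
  have hzW := C.parabolic_le J hz
  have hfix : z (C.weightCompl J) = C.weightCompl J := C.parabolicSubgroup_le_stabilizer J hz
  refine Finset.card_le_card_of_injOn (⇑z⁻¹) (fun β hβ => ?_) z⁻¹.injective.injOn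
  obtain ⟨hβΦ, -, hβneg⟩ := C.mem_invSet.1 hβ
  have hinner : ⟪C.weightCompl J, z⁻¹ β⟫_ℝ = ⟪C.weightCompl J, β⟫_ℝ := by
    simpa [hfix] using (C.inner_invariant z hzW (C.weightCompl J) (z⁻¹ β)).symm
  have hzβ := C.apply_mem_of_mem_W (inv_mem hzW) hβΦ
  refine C.mem_invSet.2 ⟨hzβ, ?_, by simpa using hβneg⟩
  exact C.isPos_of_inner_pos (lam := C.weightCompl J) (C.inner_sum_omega_simple_nonneg _) hzβ
    (hinner ▸ C.inner_weightCompl_pos_of_mem_invSet hJ hβ)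

end Parabolic

section Steinberg

theorem isPos_apply_simple_of_pairing_steinberg_nonneg {w : V ≃ₗ[ℝ] V} (hw : w ∈ C.W)
    {j : Fin C.r} (h : 0 ≤ pairing (C.steinberg w) (C.π j)) : C.IsPos (w (C.π j)) := by
  set S := Finset.univ.filter fun i => C.IsNeg (w⁻¹ (C.π i))
  have hinner : 0 ≤ ⟪∑ i ∈ S, C.ω i, w (C.π j)⟫_ℝ := by
    rw [pairing, le_div_iff₀ (C.inner_self_pos (C.simple_mem j)), zero_mul, steinberg,
      C.inner_inv_apply hw] at h
    linarith
  refine (C.isPos_or_isNeg (C.apply_mem_of_mem_W hw (C.simple_mem j))).resolve_right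
    fun hneg => ?_
  have hSc : ∀ k ∉ S, C.IsPos (w⁻¹ (C.π k)) := fun k hk =>
    (C.isPos_or_isNeg (C.apply_mem_of_mem_W (inv_mem hw) (C.simple_mem k))).resolve_right
      (by simpa [S] using hk)
  have := C.isPos_map_of_inner_sum_omega_nonpos (w⁻¹).toLinearMap hSc hneg
    (by rw [inner_neg_right]; linarith)
  simp only [LinearEquiv.coe_coe, map_neg, LinearEquiv.coe_inv, LinearEquiv.symm_apply_apply]
    at this
  exact C.not_isNeg_of_isPos (C.root_ne_zero _ (C.simple_mem j)) (C.isPos_simple j) this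

end Steinberg

end RootSystemData

/-- If `w ∈ W` and `(e_w, α∨) ≥ 0` for every `α` in a subset `Π'` of the
simple roots, then `w` is the minimal-length representative of its coset `w W_{Π'}`, i.e.
`ℓ(w s_α) > ℓ(w)` for every `α ∈ Π'`. -/
theorem statement_12
    {V : Type} [NormedAddCommGroup V] [InnerProductSpace ℝ V] [FiniteDimensional ℝ V]
    (C : RootSystemData V)
    (w : V ≃ₗ[ℝ] V) (hw : w ∈ C.W) (J : Set (Fin C.r))
    (h : ∀ i ∈ J, 0 ≤ pairing (C.steinberg w) (C.π i)) :
    (∀ i ∈ J, C.length w < C.length (w * C.s (C.π i))) ∧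
    (∀ z ∈ C.parabolicSubgroup J, C.length w ≤ C.length (w * z)) := by
  have hJ : ∀ i ∈ J, C.IsPos (w (C.π i)) := fun i hi =>
    C.isPos_apply_simple_of_pairing_steinberg_nonneg hw (h i hi)
  refine ⟨fun i hi => ?_, fun z hz => ?_⟩
  · rw [C.length_eq_card_invSet hw, C.length_eq_card_invSet (mul_mem hw (C.s_simple_mem_W i)),
      C.card_invSet_mul_simple_of_isPos (hJ i hi)]
    exact Nat.lt_succ_self _
  · rw [C.length_eq_card_invSet hw, C.length_eq_card_invSet (mul_mem hw (C.parabolic_le J hz))]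
    exact C.card_invSet_le_card_invSet_mul hJ hz
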